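/- Let Q = (Q_1,...,Q_n) be an n-tuple of nonnegative integers and G_Q the set of n-tuples I with 0 ≤ I_i ≤ Q_i for all i, partially ordered by I ⪰ J iff I_i ≤ J_i for all i. Then G_Q has the Topset Positivity Property: for every order-preserving function φ: G_Q → ℝ with ∑_{I ∈ G_Q} φ(I) ≥ 0 and every topset T ⊆ G_Q, one has ∑_{I ∈ T} φ(I) ≥ 0. -/

import Mathlib

/-!
In the paper's order `⪰` the poset `G_Q` is the order dual of the product of the chains
`{0, …, Q i}`, a finite distributive lattice. There the FKG inequality (with the uniform
measure) gives `(∑ φ) · |T| ≤ |G_Q| · ∑_{I ∈ T} φ I`, applied to `φ` and the indicator of `T`,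
both monotone; the left-hand side is nonnegative.
-/

open Finset

section DistribLattice

variable {α : Type*} [DistribLattice α] [Fintype α]

theorem Monotone.sum_mul_sum_le_card_mul_sum {f g : α → ℝ} (hf : Monotone f)
    (hg : Monotone g) :
    (∑ a, f a) * ∑ a, g a ≤ Fintype.card α * ∑ a, f a * g a := by
  cases isEmpty_or_nonempty α
  · simp
  obtain ⟨a₀, ha₀⟩ := Finite.exists_min f
  obtain ⟨b₀, hb₀⟩ := Finite.exists_min g
  -- Both sides change by the same amount when `f` or `g` is shifted by a constant,
  -- so FKG applies to the nonnegative shifts `f - f a₀` and `g - g b₀`.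
  have key := fkg (μ := 1) (f := fun a => f a - f a₀) (g := fun a => g a - g b₀)
    (fun _ => zero_le_one) (fun a => sub_nonneg.2 (ha₀ a)) (fun a => sub_nonneg.2 (hb₀ a))
    (fun a b hab => sub_le_sub_right (hf hab) _) (fun a b hab => sub_le_sub_right (hg hab) _)
    (fun _ _ => le_rfl)
  simp only [Pi.one_apply, one_mul, sum_const, card_univ, nsmul_eq_mul, mul_one, sub_mul,
    mul_sub, sum_sub_distrib, ← sum_mul, ← mul_sum] at key
  linarith

theorem sum_nonneg_of_monotone_of_isUpperSet {φ : α → ℝ} (hφ : Monotone φ)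
    (hsum : 0 ≤ ∑ a, φ a) {T : Finset α} (hT : IsUpperSet (T : Set α)) :
    0 ≤ ∑ a ∈ T, φ a := by
  classical
  cases isEmpty_or_nonempty α
  · simp [Subsingleton.elim T ∅]
  have hT_mono : Monotone fun a => if a ∈ T then (1 : ℝ) else 0 := by
    intro a b hab
    by_cases ha : a ∈ T
    · simp [ha, mem_coe.1 (hT hab ha)]
    · simp only [ha, if_false]
      positivity
  have harris := hφ.sum_mul_sum_le_card_mul_sum hT_mono
  simp only [mul_ite, mul_one, mul_zero, sum_ite_mem, univ_inter] at harris
  have hcard : (0 : ℝ) < Fintype.card α := by exact_mod_cast Fintype.card_pos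
  exact nonneg_of_mul_nonneg_right (le_trans (by positivity) harris) hcard

end DistribLattice

/-- The poset `G_Q` (with `I ⪰ J ↔ ∀ i, I i ≤ J i`) has the Topset Positivity
Property: for every order-preserving `φ` with nonnegative total sum and every
topset `T`, the sum of `φ` over `T` is nonnegative. -/
theorem statement_7 (n : ℕ) (Q : Fin n → ℕ)
    (φ : (∀ i : Fin n, Fin (Q i + 1)) → ℝ)
    (hφ : ∀ I J : (∀ i : Fin n, Fin (Q i + 1)),
      (∀ i, (I i : ℕ) ≤ (J i : ℕ)) → φ J ≤ φ I)
    (hsum : 0 ≤ ∑ I : (∀ i : Fin n, Fin (Q i + 1)), φ I)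
    (T : Finset (∀ i : Fin n, Fin (Q i + 1)))
    (hT : ∀ I ∈ T, ∀ J : (∀ i : Fin n, Fin (Q i + 1)),
      (∀ i, (J i : ℕ) ≤ (I i : ℕ)) → J ∈ T) :
    0 ≤ ∑ I ∈ T, φ I :=
  sum_nonneg_of_monotone_of_isUpperSet (α := (∀ i : Fin n, Fin (Q i + 1))ᵒᵈ)
    (φ := φ ∘ OrderDual.ofDual) (fun I J hIJ => hφ J I hIJ) hsum (T := T)
    (fun I J hJI hI => hT I hI J hJI)
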